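/- arXiv:1901.07894 — 3 statements merged into one kernel-verified Lean document; each statement's English description precedes it below -/
import Mathlib

section
/- If an n-dimensional para-Sasakian manifold with quarter-symmetric metric connection is Ricci-pseudosymmetric, i.e. S̃(R̃(X,Y)Z, W) + S̃(Z, R̃(X,Y)W) = L·[S̃((X∧Y)Z, W) + S̃(Z, (X∧Y)W)] for all X,Y,Z,W where (X∧Y)Z = g(Y,Z)X − g(X,Z)Y, then for all X, Z: (L + 2)·[S̃(X,Z) + 2(n−1)g(X,Z)] = 0. Hence either L = −2 or S̃ = −2(n−1)g. -/
open scoped InnerProductSpace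

/-!
Evaluate the pseudosymmetry condition at `(ξ, X, Z, ξ)`. Since `S̃(·, ξ) = c η` and
`R̃(ξ, X)Y = k (η(Y) X − g(X, Y) ξ)`, the `η(X) η(Z)` terms cancel on both sides: the left side
becomes `k (S̃(X, Z) − c g(X, Z))` and the right side `−L (S̃(X, Z) − c g(X, Z))`.
Here `k = 2` and `c = −2(n − 1)`.
-/

section

variable {V : Type*} [NormedAddCommGroup V] [InnerProductSpace ℝ V]

def IsRicciPseudosymmetric (St : V →ₗ[ℝ] V →ₗ[ℝ] ℝ) (Rt : V →ₗ[ℝ] V →ₗ[ℝ] V →ₗ[ℝ] V)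
    (L : ℝ) : Prop :=
  ∀ X Y Z W,
    St (Rt X Y Z) W + St Z (Rt X Y W)
      = L * (St (⟪Y, Z⟫_ℝ • X - ⟪X, Z⟫_ℝ • Y) W + St Z (⟪Y, W⟫_ℝ • X - ⟪X, W⟫_ℝ • Y))

variable {ξ : V} {St : V →ₗ[ℝ] V →ₗ[ℝ] ℝ} {c : ℝ}

theorem curvature_derivation_xi_xi {Rt : V →ₗ[ℝ] V →ₗ[ℝ] V →ₗ[ℝ] V} {k : ℝ}
    (hξ : ⟪ξ, ξ⟫_ℝ = 1) (hStsymm : ∀ X Y, St X Y = St Y X) (hStξ : ∀ X, St X ξ = c * ⟪X, ξ⟫_ℝ)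
    (hRtξ : ∀ X Y, Rt ξ X Y = k • (⟪Y, ξ⟫_ℝ • X - ⟪X, Y⟫_ℝ • ξ)) (X Z : V) :
    St (Rt ξ X Z) ξ + St Z (Rt ξ X ξ) = k * (St X Z - c * ⟪X, Z⟫_ℝ) := by
  rw [hStξ, hRtξ, hRtξ, hξ]
  simp only [map_smul, map_sub, smul_eq_mul, hStξ, real_inner_smul_left, inner_sub_left, hξ,
    hStsymm Z X]
  ring

theorem wedge_derivation_xi_xi (hξ : ⟪ξ, ξ⟫_ℝ = 1) (hStsymm : ∀ X Y, St X Y = St Y X)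
    (hStξ : ∀ X, St X ξ = c * ⟪X, ξ⟫_ℝ) (X Z : V) :
    St (⟪X, Z⟫_ℝ • ξ - ⟪ξ, Z⟫_ℝ • X) ξ + St Z (⟪X, ξ⟫_ℝ • ξ - ⟪ξ, ξ⟫_ℝ • X)
      = -(St X Z - c * ⟪X, Z⟫_ℝ) := by
  simp only [map_smul, map_sub, LinearMap.sub_apply, LinearMap.smul_apply, smul_eq_mul, hStξ, hξ,
    hStsymm Z X, real_inner_comm ξ Z]
  ring

theorem IsRicciPseudosymmetric.add_mul_sub_eq_zero {Rt : V →ₗ[ℝ] V →ₗ[ℝ] V →ₗ[ℝ] V} {k L : ℝ}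
    (hps : IsRicciPseudosymmetric St Rt L) (hξ : ⟪ξ, ξ⟫_ℝ = 1)
    (hStsymm : ∀ X Y, St X Y = St Y X) (hStξ : ∀ X, St X ξ = c * ⟪X, ξ⟫_ℝ)
    (hRtξ : ∀ X Y, Rt ξ X Y = k • (⟪Y, ξ⟫_ℝ • X - ⟪X, Y⟫_ℝ • ξ)) (X Z : V) :
    (L + k) * (St X Z - c * ⟪X, Z⟫_ℝ) = 0 := by
  have h := hps ξ X Z ξ
  rw [curvature_derivation_xi_xi hξ hStsymm hStξ hRtξ,
    wedge_derivation_xi_xi hξ hStsymm hStξ] at h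
  linear_combination h

end

theorem stmt_10_general {V : Type*} [NormedAddCommGroup V] [InnerProductSpace ℝ V]
    (n : ℕ)
    (ξ : V) (hξ : ⟪ξ, ξ⟫_ℝ = 1)
    (St : V →ₗ[ℝ] V →ₗ[ℝ] ℝ)
    (hStsymm : ∀ X Y, St X Y = St Y X)
    (hStξ : ∀ X, St X ξ = -2 * ((n : ℝ) - 1) * ⟪X, ξ⟫_ℝ)
    (Rt : V →ₗ[ℝ] V →ₗ[ℝ] V →ₗ[ℝ] V)
    (hRtξ' : ∀ X Y, Rt ξ X Y = (2 : ℝ) • (⟪Y, ξ⟫_ℝ • X - ⟪X, Y⟫_ℝ • ξ))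
    (L : ℝ)
    (hps : ∀ X Y Z W,
      St (Rt X Y Z) W + St Z (Rt X Y W)
        = L * (St (⟪Y, Z⟫_ℝ • X - ⟪X, Z⟫_ℝ • Y) W
            + St Z (⟪Y, W⟫_ℝ • X - ⟪X, W⟫_ℝ • Y))) :
    (∀ X Z, (L + 2) * (St X Z + 2 * ((n : ℝ) - 1) * ⟪X, Z⟫_ℝ) = 0) ∧
    (L = -2 ∨ ∀ X Z, St X Z = -2 * ((n : ℝ) - 1) * ⟪X, Z⟫_ℝ) := by
  have key : ∀ X Z, (L + 2) * (St X Z + 2 * ((n : ℝ) - 1) * ⟪X, Z⟫_ℝ) = 0 := fun X Z => by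
    have h := IsRicciPseudosymmetric.add_mul_sub_eq_zero hps hξ hStsymm hStξ hRtξ' X Z
    linear_combination h
  refine ⟨key, or_iff_not_imp_left.mpr fun hL X Z => ?_⟩
  have hL2 : L + 2 ≠ 0 := fun h => hL (by linarith)
  linear_combination (mul_eq_zero.mp (key X Z)).resolve_left hL2

/-- if an n-dimensional para-Sasakian structure with
quarter-symmetric metric connection is Ricci-pseudosymmetric, then
(L + 2)·[S̃(X,Z) + 2(n−1)g(X,Z)] = 0 for all X, Z; hence either L = −2 or
S̃ = −2(n−1)g. -/
theorem stmt_10 {V : Type*} [NormedAddCommGroup V] [InnerProductSpace ℝ V]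
    [FiniteDimensional ℝ V] (n : ℕ) (hn : Module.finrank ℝ V = n)
    (ξ : V) (hξ : ⟪ξ, ξ⟫_ℝ = 1)
    (St : V →ₗ[ℝ] V →ₗ[ℝ] ℝ)
    (hStsymm : ∀ X Y, St X Y = St Y X)
    (hStξ : ∀ X, St X ξ = -2 * ((n : ℝ) - 1) * ⟪X, ξ⟫_ℝ)
    (Rt : V →ₗ[ℝ] V →ₗ[ℝ] V →ₗ[ℝ] V)
    (hRtξ : ∀ X Y, Rt X Y ξ = (2 : ℝ) • (⟪X, ξ⟫_ℝ • Y - ⟪Y, ξ⟫_ℝ • X))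
    (hRtξ' : ∀ X Y, Rt ξ X Y = (2 : ℝ) • (⟪Y, ξ⟫_ℝ • X - ⟪X, Y⟫_ℝ • ξ))
    (L : ℝ)
    (hps : ∀ X Y Z W,
      St (Rt X Y Z) W + St Z (Rt X Y W)
        = L * (St (⟪Y, Z⟫_ℝ • X - ⟪X, Z⟫_ℝ • Y) W
            + St Z (⟪Y, W⟫_ℝ • X - ⟪X, W⟫_ℝ • Y))) :
    (∀ X Z, (L + 2) * (St X Z + 2 * ((n : ℝ) - 1) * ⟪X, Z⟫_ℝ) = 0) ∧
    (L = -2 ∨ ∀ X Z, St X Z = -2 * ((n : ℝ) - 1) * ⟪X, Z⟫_ℝ) :=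
  stmt_10_general n ξ hξ St hStsymm hStξ Rt hRtξ' L hps
end

section
/- If a pseudosymmetric condition holds for the quarter-symmetric curvature, namely (R̃(ξ,Y)·R̃)(U,V,W) = L·((ξ∧Y)·R̃)(U,V,W) for all vectors, and L ≠ −2, then contracting yields S̃(Y,U) = −2(n−1)g(Y,U) for all Y, U; i.e., the manifold is Einstein with respect to the quarter-symmetric metric connection. -/
/-!
Since `φ ξ = 0` and `R(ξ,Y) = −(ξ ∧ Y)`, the quarter-symmetric curvature satisfies
`R̃(ξ,Y) = −2 (ξ ∧ Y)`. As `R̃` is homogeneous in each slot, the derivation `R̃(ξ,Y)·R̃` is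
`−2 ((ξ ∧ Y)·R̃)`, so the pseudosymmetry condition becomes `(−2 − L) ((ξ ∧ Y)·R̃) = 0`, and
`L ≠ −2` gives `(ξ ∧ Y)·R̃ = 0`. Pairing this with `ξ` and using
`η(R̃(X,Y)Z) = −2 η((X ∧ Y)Z)` shows `R̃ = −2 (· ∧ ·)`, i.e. `R̃` has constant curvature `−2`;
its Ricci trace is then `−2 (n − 1) g`.
-/

open scoped InnerProductSpace

namespace QuarterSymmetric

section Derivation

variable {K M : Type*} [Field K] [AddCommGroup M] [Module K M]

/-- `(T·F)(U,W₁,W₂)`: the action of an endomorphism `T` on a `(1,3)`-tensor `F` as a derivation. -/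
def derivAction (T : M → M) (F : M → M → M → M) (U W₁ W₂ : M) : M :=
  T (F U W₁ W₂) - F (T U) W₁ W₂ - F U (T W₁) W₂ - F U W₁ (T W₂)

variable {F : M → M → M → M}
  (h₁ : ∀ (a : K) X Y Z, F (a • X) Y Z = a • F X Y Z)
  (h₂ : ∀ (a : K) X Y Z, F X (a • Y) Z = a • F X Y Z)
  (h₃ : ∀ (a : K) X Y Z, F X Y (a • Z) = a • F X Y Z)
include h₁ h₂ h₃

theorem derivAction_smul (a : K) (T : M → M) :
    derivAction (a • T) F = a • derivAction T F := by
  funext U W₁ W₂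
  simp only [derivAction, Pi.smul_apply, h₁, h₂, h₃, smul_sub]

theorem derivAction_eq_zero_of_pseudosymmetric {c L : K} (hL : L ≠ c) {T S : M → M}
    (hT : T = c • S) (hps : ∀ U W₁ W₂, derivAction T F U W₁ W₂ = L • derivAction S F U W₁ W₂) :
    derivAction S F = 0 := by
  funext U W₁ W₂
  have h : (c - L) • derivAction S F U W₁ W₂ = 0 := by
    rw [sub_smul, sub_eq_zero, ← hps, hT, derivAction_smul h₁ h₂ h₃]
    rfl
  exact (smul_eq_zero.mp h).resolve_left (sub_ne_zero.mpr hL.symm)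

end Derivation

variable {V : Type*} [NormedAddCommGroup V] [InnerProductSpace ℝ V]

def wedge (A B C : V) : V := ⟪B, C⟫_ℝ • A - ⟪A, C⟫_ℝ • B

theorem inner_wedge_left (A B C D : V) :
    ⟪wedge A B C, D⟫_ℝ = ⟪B, C⟫_ℝ * ⟪A, D⟫_ℝ - ⟪A, C⟫_ℝ * ⟪B, D⟫_ℝ := by
  simp only [wedge, inner_sub_left, real_inner_smul_left]

theorem inner_wedge_right (A B C D : V) :
    ⟪D, wedge A B C⟫_ℝ = ⟪B, C⟫_ℝ * ⟪A, D⟫_ℝ - ⟪A, C⟫_ℝ * ⟪B, D⟫_ℝ := by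
  rw [real_inner_comm, inner_wedge_left]

theorem eq_smul_wedge_of_derivAction_wedge_eq_zero {F : V → V → V → V} {ξ : V}
    (hξ : ⟪ξ, ξ⟫_ℝ = 1) {c : ℝ} (hFξ : ∀ X Y Z, ⟪F X Y Z, ξ⟫_ℝ = c * ⟪wedge X Y Z, ξ⟫_ℝ)
    (hF : ∀ Y, derivAction (wedge ξ Y) F = 0) (U W₁ W₂ : V) :
    F U W₁ W₂ = c • wedge U W₁ W₂ := by
  refine ext_inner_right ℝ fun Y => ?_
  have h := congrArg (⟪·, ξ⟫_ℝ) (congrFun (congrFun (congrFun (hF Y) U) W₁) W₂)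
  simp only [derivAction, inner_sub_left, hFξ, inner_wedge_left, inner_wedge_right,
    Pi.zero_apply, inner_zero_left, hξ] at h
  simp only [real_inner_smul_left, inner_wedge_left]
  rw [real_inner_comm (F U W₁ W₂) ξ, hFξ, inner_wedge_left, real_inner_comm ξ U,
    real_inner_comm ξ W₁] at h
  rw [real_inner_comm Y (F U W₁ W₂), real_inner_comm Y U, real_inner_comm Y W₁]
  linear_combination h

theorem sum_inner_wedge_orthonormalBasis {ι : Type*} [Fintype ι] (b : OrthonormalBasis ι ℝ V)
    (Y U : V) : ∑ i, ⟪wedge (b i) Y U, b i⟫_ℝ = ((Fintype.card ι : ℝ) - 1) * ⟪Y, U⟫_ℝ := by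
  have hpar : ∑ i, ⟪b i, U⟫_ℝ * ⟪Y, b i⟫_ℝ = ⟪Y, U⟫_ℝ := by
    simpa only [real_inner_comm (b _) U, mul_comm] using b.sum_inner_mul_inner Y U
  simp only [inner_wedge_left, b.orthonormal.1, real_inner_self_eq_norm_sq, Finset.sum_sub_distrib,
    hpar, Finset.sum_const, Finset.card_univ, nsmul_eq_mul]
  ring

/-- The curvature `R̃` of the quarter-symmetric metric connection. -/
def curvature (R : V →ₗ[ℝ] V →ₗ[ℝ] V →ₗ[ℝ] V) (φ : V →ₗ[ℝ] V) (ξ X Y Z : V) : V :=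
  R X Y Z + (3 * ⟪φ X, Z⟫_ℝ) • φ Y - (3 * ⟪φ Y, Z⟫_ℝ) • φ X
    + ⟪Z, ξ⟫_ℝ • (⟪X, ξ⟫_ℝ • Y - ⟪Y, ξ⟫_ℝ • X)
    - (⟪Y, Z⟫_ℝ * ⟪X, ξ⟫_ℝ - ⟪X, Z⟫_ℝ * ⟪Y, ξ⟫_ℝ) • ξ

variable (R : V →ₗ[ℝ] V →ₗ[ℝ] V →ₗ[ℝ] V) (φ : V →ₗ[ℝ] V) (ξ : V)

theorem curvature_smul_left (a : ℝ) (X Y Z : V) :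
    curvature R φ ξ (a • X) Y Z = a • curvature R φ ξ X Y Z := by
  simp only [curvature, map_smul, LinearMap.smul_apply, real_inner_smul_left]
  module

theorem curvature_smul_middle (a : ℝ) (X Y Z : V) :
    curvature R φ ξ X (a • Y) Z = a • curvature R φ ξ X Y Z := by
  simp only [curvature, map_smul, LinearMap.smul_apply, real_inner_smul_left]
  module

theorem curvature_smul_right (a : ℝ) (X Y Z : V) :
    curvature R φ ξ X Y (a • Z) = a • curvature R φ ξ X Y Z := by
  simp only [curvature, map_smul, real_inner_smul_left, real_inner_smul_right]
  module

variable {R φ ξ}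

theorem curvature_xi_left (hξ : ⟪ξ, ξ⟫_ℝ = 1) (hφξ : φ ξ = 0)
    (hRξ : ∀ X Y, R ξ X Y = ⟪Y, ξ⟫_ℝ • X - ⟪X, Y⟫_ℝ • ξ) (Y : V) :
    curvature R φ ξ ξ Y = (-2 : ℝ) • wedge ξ Y := by
  funext Z
  simp only [curvature, wedge, hRξ, hφξ, hξ, Pi.smul_apply, inner_zero_left, smul_zero,
    mul_zero, zero_smul, add_zero, sub_zero, real_inner_comm ξ Z]
  module

theorem inner_curvature_xi (hξ : ⟪ξ, ξ⟫_ℝ = 1) (hsa : ∀ X Y, ⟪φ X, Y⟫_ℝ = ⟪X, φ Y⟫_ℝ)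
    (hφξ : φ ξ = 0)
    (hRη : ∀ X Y Z, ⟪R X Y Z, ξ⟫_ℝ = ⟪X, Z⟫_ℝ * ⟪Y, ξ⟫_ℝ - ⟪Y, Z⟫_ℝ * ⟪X, ξ⟫_ℝ) (X Y Z : V) :
    ⟪curvature R φ ξ X Y Z, ξ⟫_ℝ = -2 * ⟪wedge X Y Z, ξ⟫_ℝ := by
  simp only [curvature, inner_wedge_left, inner_add_left, inner_sub_left, real_inner_smul_left,
    hRη, hsa _ ξ, hφξ, inner_zero_right, hξ]
  ring

end QuarterSymmetric

open QuarterSymmetric in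
theorem stmt_11_general {V : Type*} [NormedAddCommGroup V] [InnerProductSpace ℝ V] (n : ℕ)
    (b : Module.Basis (Fin n) ℝ V) (hb : Orthonormal ℝ b)
    (ξ : V) (hξ : ⟪ξ, ξ⟫_ℝ = 1)
    (φ : V →ₗ[ℝ] V)
    (hsa : ∀ X Y, ⟪φ X, Y⟫_ℝ = ⟪X, φ Y⟫_ℝ)
    (hφξ : φ ξ = 0)
    (R : V →ₗ[ℝ] V →ₗ[ℝ] V →ₗ[ℝ] V)
    (hRξ' : ∀ X Y, R ξ X Y = ⟪Y, ξ⟫_ℝ • X - ⟪X, Y⟫_ℝ • ξ)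
    (hRη : ∀ X Y Z, ⟪R X Y Z, ξ⟫_ℝ = ⟪X, Z⟫_ℝ * ⟪Y, ξ⟫_ℝ - ⟪Y, Z⟫_ℝ * ⟪X, ξ⟫_ℝ)
    (Rt : V → V → V → V)
    (hRt : ∀ X Y Z, Rt X Y Z = R X Y Z
      + (3 * ⟪φ X, Z⟫_ℝ) • φ Y - (3 * ⟪φ Y, Z⟫_ℝ) • φ X
      + ⟪Z, ξ⟫_ℝ • (⟪X, ξ⟫_ℝ • Y - ⟪Y, ξ⟫_ℝ • X)
      - (⟪Y, Z⟫_ℝ * ⟪X, ξ⟫_ℝ - ⟪X, Z⟫_ℝ * ⟪Y, ξ⟫_ℝ) • ξ)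
    (L : ℝ) (hL : L ≠ -2)
    (hps : ∀ Y U W₁ W₂,
      Rt ξ Y (Rt U W₁ W₂) - Rt (Rt ξ Y U) W₁ W₂
        - Rt U (Rt ξ Y W₁) W₂ - Rt U W₁ (Rt ξ Y W₂)
      = L • ((⟪Y, Rt U W₁ W₂⟫_ℝ • ξ - ⟪ξ, Rt U W₁ W₂⟫_ℝ • Y)
          - Rt (⟪Y, U⟫_ℝ • ξ - ⟪ξ, U⟫_ℝ • Y) W₁ W₂
          - Rt U (⟪Y, W₁⟫_ℝ • ξ - ⟪ξ, W₁⟫_ℝ • Y) W₂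
          - Rt U W₁ (⟪Y, W₂⟫_ℝ • ξ - ⟪ξ, W₂⟫_ℝ • Y))) :
    ∀ Y U, (∑ i, ⟪Rt (b i) Y U, b i⟫_ℝ) = -2 * ((n : ℝ) - 1) * ⟪Y, U⟫_ℝ := by
  obtain rfl : Rt = curvature R φ ξ := funext fun X => funext fun Y => funext (hRt X Y)
  have hsemi : ∀ Y, derivAction (wedge ξ Y) (curvature R φ ξ) = 0 := fun Y =>
    derivAction_eq_zero_of_pseudosymmetric (curvature_smul_left R φ ξ)
      (curvature_smul_middle R φ ξ) (curvature_smul_right R φ ξ) hL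
      (curvature_xi_left hξ hφξ hRξ' Y) (hps Y)
  have hconst := eq_smul_wedge_of_derivAction_wedge_eq_zero hξ
    (inner_curvature_xi hξ hsa hφξ hRη) hsemi
  intro Y U
  have htrace := sum_inner_wedge_orthonormalBasis (b.toOrthonormalBasis hb) Y U
  simp only [Module.Basis.coe_toOrthonormalBasis, Fintype.card_fin] at htrace
  simp only [hconst, real_inner_smul_left, ← Finset.mul_sum, htrace]
  ring

/-- if the pseudosymmetry condition
(R̃(ξ,Y)·R̃)(U,V,W) = L·((ξ∧Y)·R̃)(U,V,W) holds with L ≠ −2, then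
S̃(Y,U) = −2(n−1)g(Y,U), where S̃ is the Ricci trace of the quarter-symmetric
curvature R̃ over an orthonormal basis. -/
theorem stmt_11 {V : Type*} [NormedAddCommGroup V] [InnerProductSpace ℝ V] (n : ℕ)
    (b : Module.Basis (Fin n) ℝ V) (hb : Orthonormal ℝ b)
    (ξ : V) (hξ : ⟪ξ, ξ⟫_ℝ = 1)
    (φ : V →ₗ[ℝ] V)
    (hsa : ∀ X Y, ⟪φ X, Y⟫_ℝ = ⟪X, φ Y⟫_ℝ)
    (hφξ : φ ξ = 0)
    (hsq : ∀ X, φ (φ X) = X - ⟪X, ξ⟫_ℝ • ξ)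
    (hcomp : ∀ X Y, ⟪φ X, φ Y⟫_ℝ = ⟪X, Y⟫_ℝ - ⟪X, ξ⟫_ℝ * ⟪Y, ξ⟫_ℝ)
    (R : V →ₗ[ℝ] V →ₗ[ℝ] V →ₗ[ℝ] V)
    (hRanti : ∀ X Y Z, R X Y Z = - R Y X Z)
    (hRpair : ∀ X Y Z W, ⟪R X Y Z, W⟫_ℝ = - ⟪R X Y W, Z⟫_ℝ)
    (hRξ : ∀ X Y, R X Y ξ = ⟪X, ξ⟫_ℝ • Y - ⟪Y, ξ⟫_ℝ • X)
    (hRξ' : ∀ X Y, R ξ X Y = ⟪Y, ξ⟫_ℝ • X - ⟪X, Y⟫_ℝ • ξ)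
    (hRη : ∀ X Y Z, ⟪R X Y Z, ξ⟫_ℝ = ⟪X, Z⟫_ℝ * ⟪Y, ξ⟫_ℝ - ⟪Y, Z⟫_ℝ * ⟪X, ξ⟫_ℝ)
    (Rt : V → V → V → V)
    (hRt : ∀ X Y Z, Rt X Y Z = R X Y Z
      + (3 * ⟪φ X, Z⟫_ℝ) • φ Y - (3 * ⟪φ Y, Z⟫_ℝ) • φ X
      + ⟪Z, ξ⟫_ℝ • (⟪X, ξ⟫_ℝ • Y - ⟪Y, ξ⟫_ℝ • X)
      - (⟪Y, Z⟫_ℝ * ⟪X, ξ⟫_ℝ - ⟪X, Z⟫_ℝ * ⟪Y, ξ⟫_ℝ) • ξ)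
    (L : ℝ) (hL : L ≠ -2)
    (hps : ∀ Y U W₁ W₂,
      Rt ξ Y (Rt U W₁ W₂) - Rt (Rt ξ Y U) W₁ W₂
        - Rt U (Rt ξ Y W₁) W₂ - Rt U W₁ (Rt ξ Y W₂)
      = L • ((⟪Y, Rt U W₁ W₂⟫_ℝ • ξ - ⟪ξ, Rt U W₁ W₂⟫_ℝ • Y)
          - Rt (⟪Y, U⟫_ℝ • ξ - ⟪ξ, U⟫_ℝ • Y) W₁ W₂
          - Rt U (⟪Y, W₁⟫_ℝ • ξ - ⟪ξ, W₁⟫_ℝ • Y) W₂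
          - Rt U W₁ (⟪Y, W₂⟫_ℝ • ξ - ⟪ξ, W₂⟫_ℝ • Y))) :
    ∀ Y U, (∑ i, ⟪Rt (b i) Y U, b i⟫_ℝ) = -2 * ((n : ℝ) - 1) * ⟪Y, U⟫_ℝ :=
  stmt_11_general n b hb ξ hξ φ hsa hφξ R hRξ' hRη Rt hRt L hL hps
end

section
/- If an n-dimensional para-Sasakian manifold with quarter-symmetric metric connection is projectively flat with respect to that connection, i.e. g(R̃(X,Y)Z, W) = (1/(n−1))·[S̃(Y,Z)g(X,W) − S̃(X,Z)g(Y,W)] for all X,Y,Z,W, then S̃(X,Z) = −2(n−1)g(X,Z) for all X, Z (the manifold is Einstein with respect to the quarter-symmetric connection). -/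
open scoped InnerProductSpace

/-!
Evaluate projective flatness at `(ξ, X, Z, ξ)`. The left side is known from the formula for
`R̃(ξ, X)Z`, and on the right `S̃(ξ, Z)` is known from `S̃(·, ξ)`; the `η(X)η(Z)` terms then
cancel and leave `S̃(X, Z) = −2(n−1) g(X, Z)`.
-/

section

variable {V : Type*} [NormedAddCommGroup V] [InnerProductSpace ℝ V]

lemma inner_two_smul_sub_smul_of_inner_self_eq_one {ξ : V} (hξ : ⟪ξ, ξ⟫_ℝ = 1) (X Z : V) :
    ⟪(2 : ℝ) • (⟪Z, ξ⟫_ℝ • X - ⟪X, Z⟫_ℝ • ξ), ξ⟫_ℝ = 2 * (⟪X, ξ⟫_ℝ * ⟪Z, ξ⟫_ℝ - ⟪X, Z⟫_ℝ) := by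
  rw [real_inner_smul_left, inner_sub_left, real_inner_smul_left, real_inner_smul_left, hξ]
  ring

theorem eq_neg_two_mul_inner_of_projectivelyFlat {c : ℝ} (hc : c ≠ 0) {ξ : V} (hξ : ⟪ξ, ξ⟫_ℝ = 1)
    (S : V → V → ℝ) (hSξ : ∀ Z, S ξ Z = -2 * c * ⟪Z, ξ⟫_ℝ) (R : V → V → V → V)
    (hRξ : ∀ X Z, R ξ X Z = (2 : ℝ) • (⟪Z, ξ⟫_ℝ • X - ⟪X, Z⟫_ℝ • ξ))
    (hflat : ∀ X Y Z W, ⟪R X Y Z, W⟫_ℝ = (1 / c) * (S Y Z * ⟪X, W⟫_ℝ - S X Z * ⟪Y, W⟫_ℝ))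
    (X Z : V) : S X Z = -2 * c * ⟪X, Z⟫_ℝ := by
  have key := hflat ξ X Z ξ
  rw [hRξ, inner_two_smul_sub_smul_of_inner_self_eq_one hξ, hξ, hSξ, real_inner_comm ξ X] at key
  field_simp at key
  linarith

end

theorem stmt_12_general {V : Type*} [NormedAddCommGroup V] [InnerProductSpace ℝ V]
    (n : ℕ) (hn2 : 2 ≤ n)
    (ξ : V) (hξ : ⟪ξ, ξ⟫_ℝ = 1)
    (St : V →ₗ[ℝ] V →ₗ[ℝ] ℝ)
    (hStsymm : ∀ X Y, St X Y = St Y X)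
    (hStξ : ∀ X, St X ξ = -2 * ((n : ℝ) - 1) * ⟪X, ξ⟫_ℝ)
    (Rt : V →ₗ[ℝ] V →ₗ[ℝ] V →ₗ[ℝ] V)
    (hRtξ' : ∀ X Y, Rt ξ X Y = (2 : ℝ) • (⟪Y, ξ⟫_ℝ • X - ⟪X, Y⟫_ℝ • ξ))
    (hflat : ∀ X Y Z W, ⟪Rt X Y Z, W⟫_ℝ
      = (1 / ((n : ℝ) - 1)) * (St Y Z * ⟪X, W⟫_ℝ - St X Z * ⟪Y, W⟫_ℝ)) :
    ∀ X Z, St X Z = -2 * ((n : ℝ) - 1) * ⟪X, Z⟫_ℝ := by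
  have hn : (n : ℝ) - 1 ≠ 0 := by
    have : (2 : ℝ) ≤ n := by exact_mod_cast hn2
    linarith
  exact eq_neg_two_mul_inner_of_projectivelyFlat hn hξ (fun X Z ↦ St X Z)
    (fun Z ↦ (hStsymm ξ Z).trans (hStξ Z)) (fun X Y Z ↦ Rt X Y Z) hRtξ' hflat

/-- a projectively flat para-Sasakian structure with
quarter-symmetric metric connection is Einstein with respect to that connection:
S̃(X,Z) = −2(n−1)g(X,Z). -/
theorem stmt_12 {V : Type*} [NormedAddCommGroup V] [InnerProductSpace ℝ V]
    [FiniteDimensional ℝ V] (n : ℕ) (hn : Module.finrank ℝ V = n) (hn2 : 2 ≤ n)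
    (ξ : V) (hξ : ⟪ξ, ξ⟫_ℝ = 1)
    (St : V →ₗ[ℝ] V →ₗ[ℝ] ℝ)
    (hStsymm : ∀ X Y, St X Y = St Y X)
    (hStξ : ∀ X, St X ξ = -2 * ((n : ℝ) - 1) * ⟪X, ξ⟫_ℝ)
    (Rt : V →ₗ[ℝ] V →ₗ[ℝ] V →ₗ[ℝ] V)
    (hRtξ' : ∀ X Y, Rt ξ X Y = (2 : ℝ) • (⟪Y, ξ⟫_ℝ • X - ⟪X, Y⟫_ℝ • ξ))
    (hflat : ∀ X Y Z W, ⟪Rt X Y Z, W⟫_ℝ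
      = (1 / ((n : ℝ) - 1)) * (St Y Z * ⟪X, W⟫_ℝ - St X Z * ⟪Y, W⟫_ℝ)) :
    ∀ X Z, St X Z = -2 * ((n : ℝ) - 1) * ⟪X, Z⟫_ℝ :=
  stmt_12_general n hn2 ξ hξ St hStsymm hStξ Rt hRtξ' hflat
end
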